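/- If H is a distribution function on (0,∞) with H(0)=0 that is regularly varying at 0 with index γ ∈ (0, α), and S ~ Beta(α,β) is independent of R ~ H, then the df H_{α,β} of W = RS satisfies lim_{x↓0} H_{α,β}(x)/H(x) = Γ(α+β)Γ(α−γ)/(Γ(α)Γ(α+β−γ)); in particular H_{α,β} is regularly varying at 0 with index γ. -/

import Mathlib

open MeasureTheory ProbabilityTheory Real Filter Topology Set
open scoped ENNReal

/-- Density (w.r.t. Lebesgue measure) of the Beta(a,b) distribution. -/
noncomputable def betaPDF (a b : ℝ) (x : ℝ) : ℝ≥0∞ :=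
  if x ∈ Set.Ioo (0 : ℝ) 1 then
    ENNReal.ofReal (Real.Gamma (a + b) / (Real.Gamma a * Real.Gamma b)
      * x ^ (a - 1) * (1 - x) ^ (b - 1))
  else 0

/-- A function `F` is regularly varying at `0` with index `γ`. -/
def RegVarAt0 (F : ℝ → ℝ) (γ : ℝ) : Prop :=
  ∀ t : ℝ, 0 < t →
    Filter.Tendsto (fun x => F (t * x) / F x) (nhdsWithin 0 (Set.Ioi 0)) (nhds (t ^ γ))

/-!
Conditioning on `S` gives `H_{α,β}(x) = ∫ H (x / s) dBeta(α,β)(s)`, so `H_{α,β}(x) / H(x)` is the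
Beta-average of `H (x / s) / H x`, which tends to `s ^ (-γ)` pointwise by regular variation.
Fix `γ < ρ < α`. Near `0`, regular variation gives the doubling bound `H (2x) ≤ 2 ^ ρ H x`, hence
Potter's bound `H (x / s) / H x ≤ C s ^ (-ρ)` (using `H ≤ 1` once `x / s` leaves the doubling
range), and `s ^ (-ρ)` is Beta-integrable because `ρ < α`. Dominated convergence gives the limit
`∫ s ^ (-γ) dBeta(α,β) = B(α - γ, β) / B(α, β)`, and a function asymptotic to a nonzero multiple of
`H` is regularly varying with the same index.
-/

lemma betaPDF_eq_probabilityTheory_betaPDF (a b : ℝ) :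
    _root_.betaPDF a b = ProbabilityTheory.betaPDF a b := by
  funext x
  simp only [_root_.betaPDF, ProbabilityTheory.betaPDF_eq, mem_Ioo, ProbabilityTheory.beta,
    one_div_div]
  split_ifs <;> simp

namespace ProbabilityTheory

lemma measurable_betaPDF (a b : ℝ) : Measurable (betaPDF a b) :=
  (measurable_betaPDFReal a b).ennreal_ofReal

lemma ae_mem_Ioo_betaMeasure (a b : ℝ) : ∀ᵐ x ∂betaMeasure a b, x ∈ Ioo 0 1 := by
  change betaMeasure a b (Ioo 0 1)ᶜ = 0
  rw [betaMeasure, withDensity_apply _ measurableSet_Ioo.compl]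
  exact setLIntegral_eq_zero measurableSet_Ioo.compl fun x hx => by
    simp [betaPDF_eq, show ¬(0 < x ∧ x < 1) from hx]

lemma ofReal_rpow_neg_mul_betaPDF {a b p : ℝ} (hpa : p < a) (hb : 0 < b) (x : ℝ) :
    ENNReal.ofReal (x ^ (-p)) * betaPDF a b x
      = ENNReal.ofReal (beta (a - p) b / beta a b) * betaPDF (a - p) b x := by
  by_cases hx : 0 < x ∧ x < 1
  · have hbeta := beta_pos (sub_pos.mpr hpa) hb
    rw [betaPDF_of_pos_lt_one hx.1 hx.2, betaPDF_of_pos_lt_one hx.1 hx.2,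
      ← ENNReal.ofReal_mul (rpow_nonneg hx.1.le _), ← ENNReal.ofReal_mul' (mul_nonneg
        (mul_nonneg (by positivity) (rpow_nonneg hx.1.le _)) (rpow_nonneg (by linarith) _))]
    congr 1
    rw [show a - p - 1 = -p + (a - 1) by ring, rpow_add hx.1]
    field_simp
  · simp [betaPDF_eq, hx]

lemma lintegral_ofReal_rpow_neg_betaMeasure {a b p : ℝ} (hpa : p < a) (hb : 0 < b) :
    ∫⁻ x, ENNReal.ofReal (x ^ (-p)) ∂betaMeasure a b
      = ENNReal.ofReal (beta (a - p) b / beta a b) := by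
  rw [betaMeasure, lintegral_withDensity_eq_lintegral_mul _ (measurable_betaPDF a b)
    (by fun_prop)]
  simp_rw [Pi.mul_apply, mul_comm (betaPDF a b _), ofReal_rpow_neg_mul_betaPDF hpa hb]
  rw [lintegral_const_mul _ (measurable_betaPDF _ _),
    lintegral_betaPDF_eq_one (sub_pos.mpr hpa) hb, mul_one]

lemma rpow_neg_nonneg_ae_betaMeasure (a b p : ℝ) : 0 ≤ᵐ[betaMeasure a b] fun x => x ^ (-p) := by
  filter_upwards [ae_mem_Ioo_betaMeasure a b] with x hx using rpow_nonneg hx.1.le _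

lemma integrable_rpow_neg_betaMeasure {a b p : ℝ} (hpa : p < a) (hb : 0 < b) :
    Integrable (fun x => x ^ (-p)) (betaMeasure a b) := by
  refine ⟨by fun_prop, ?_⟩
  rw [hasFiniteIntegral_iff_ofReal (rpow_neg_nonneg_ae_betaMeasure a b p),
    lintegral_ofReal_rpow_neg_betaMeasure hpa hb]
  exact ENNReal.ofReal_lt_top

lemma integral_rpow_neg_betaMeasure {a b p : ℝ} (ha : 0 < a) (hpa : p < a) (hb : 0 < b) :
    ∫ x, x ^ (-p) ∂betaMeasure a b = beta (a - p) b / beta a b := by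
  rw [integral_eq_lintegral_of_nonneg_ae (rpow_neg_nonneg_ae_betaMeasure a b p) (by fun_prop),
    lintegral_ofReal_rpow_neg_betaMeasure hpa hb, ENNReal.toReal_ofReal]
  exact (div_pos (beta_pos (sub_pos.mpr hpa) hb) (beta_pos ha hb)).le

lemma beta_sub_div_beta {a b : ℝ} (p : ℝ) (hb : 0 < b) (hab : 0 < a + b) :
    beta (a - p) b / beta a b
      = Real.Gamma (a + b) * Real.Gamma (a - p) / (Real.Gamma a * Real.Gamma (a + b - p)) := by
  have := Real.Gamma_pos_of_pos hb
  have := Real.Gamma_pos_of_pos hab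
  rw [beta, beta, sub_add_eq_add_sub]
  field_simp

end ProbabilityTheory

section Doubling

variable {H : ℝ → ℝ} {ρ δ : ℝ}

lemma le_pow_mul_of_doubling (hmono : Monotone H)
    (hdouble : ∀ x ∈ Ioc 0 δ, H (2 * x) ≤ 2 ^ ρ * H x) (n : ℕ) {x y : ℝ} (hx : 0 < x)
    (hxy : x ≤ y) (hyx : y ≤ 2 ^ n * x) (hyδ : y ≤ δ) :
    H y ≤ (2 ^ ρ) ^ n * H x := by
  induction n generalizing y with
  | zero => simpa using hmono (by simpa using hyx)
  | succ n ih =>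
    set z := max x (y / 2)
    have hxz : x ≤ z := le_max_left _ _
    have hzδ : z ≤ δ := max_le (hxy.trans hyδ) (by linarith)
    have hzn : z ≤ 2 ^ n * x :=
      max_le (le_mul_of_one_le_left hx.le (one_le_pow₀ one_le_two))
        (by rw [pow_succ] at hyx; linarith)
    calc H y ≤ H (2 * z) := hmono (by linarith [le_max_right x (y / 2)])
      _ ≤ 2 ^ ρ * H z := hdouble z ⟨hx.trans_le hxz, hzδ⟩
      _ ≤ 2 ^ ρ * ((2 ^ ρ) ^ n * H x) := by gcongr; exact ih hxz hzn hzδ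
      _ = (2 ^ ρ) ^ (n + 1) * H x := by ring

lemma le_rpow_mul_of_doubling (hmono : Monotone H) (hnn : ∀ x, 0 ≤ H x) (hρ : 0 ≤ ρ)
    (hdouble : ∀ x ∈ Ioc 0 δ, H (2 * x) ≤ 2 ^ ρ * H x) {x y : ℝ} (hx : 0 < x) (hxy : x ≤ y)
    (hyδ : y ≤ δ) :
    H y ≤ 2 ^ ρ * (y / x) ^ ρ * H x := by
  obtain ⟨n, hn, hn'⟩ := exists_nat_pow_near ((one_le_div hx).mpr hxy) one_lt_two
  have hyx : y ≤ 2 ^ (n + 1) * x := ((div_lt_iff₀ hx).mp hn').le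
  have := hnn x
  calc H y ≤ (2 ^ ρ) ^ (n + 1) * H x := le_pow_mul_of_doubling hmono hdouble _ hx hxy hyx hyδ
    _ = 2 ^ ρ * ((2 : ℝ) ^ n) ^ ρ * H x := by rw [pow_succ, rpow_pow_comm zero_le_two]; ring
    _ ≤ 2 ^ ρ * (y / x) ^ ρ * H x := by gcongr

end Doubling

namespace RegVarAt0

variable {H : ℝ → ℝ} {γ : ℝ}

lemma eventually_ne_zero (hH : RegVarAt0 H γ) : ∀ᶠ x in 𝓝[>] 0, H x ≠ 0 := by
  filter_upwards [(hH 1 one_pos).eventually_ne (by simp : (1 : ℝ) ^ γ ≠ 0)] with x hx h0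
  simp [h0] at hx

lemma pos_of_monotone (hH : RegVarAt0 H γ) (hmono : Monotone H) (hnn : ∀ x, 0 ≤ H x) {x : ℝ}
    (hx : 0 < x) : 0 < H x := by
  obtain ⟨u, hu, hsub⟩ := mem_nhdsGT_iff_exists_Ioc_subset.mp hH.eventually_ne_zero
  have hy : min x u ∈ Ioc 0 u := ⟨lt_min hx hu, min_le_right _ _⟩
  exact ((hnn _).lt_of_ne' (hsub hy)).trans_le (hmono (min_le_left _ _))

lemma eventually_le_two_rpow_mul (hH : RegVarAt0 H γ) (hmono : Monotone H)
    (hnn : ∀ x, 0 ≤ H x) {ρ : ℝ} (hγρ : γ < ρ) : ∀ᶠ x in 𝓝[>] 0, H (2 * x) ≤ 2 ^ ρ * H x := by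
  filter_upwards [(hH 2 two_pos).eventually_lt_const (rpow_lt_rpow_of_exponent_lt one_lt_two hγρ),
    self_mem_nhdsWithin] with x hx hx0
  exact ((div_lt_iff₀ (hH.pos_of_monotone hmono hnn hx0)).mp hx).le

/-- Potter's bound. -/
lemma exists_div_le_mul_rpow_neg (hH : RegVarAt0 H γ) (hmono : Monotone H)
    (hnn : ∀ x, 0 ≤ H x) (hle : ∀ x, H x ≤ 1) {ρ : ℝ} (hγρ : γ < ρ) (hρ : 0 ≤ ρ) :
    ∃ C, ∀ᶠ x in 𝓝[>] 0, ∀ s ∈ Ioo (0 : ℝ) 1, H (x / s) / H x ≤ C * s ^ (-ρ) := by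
  obtain ⟨δ, hδ : 0 < δ, hdouble⟩ :=
    mem_nhdsGT_iff_exists_Ioc_subset.mp (hH.eventually_le_two_rpow_mul hmono hnn hγρ)
  have hHδ := hH.pos_of_monotone hmono hnn hδ
  refine ⟨2 ^ ρ / H δ, ?_⟩
  filter_upwards [Ioc_mem_nhdsGT hδ] with x ⟨hx, hxδ⟩ s ⟨hs0, hs1⟩
  have hHx := hH.pos_of_monotone hmono hnn hx
  have hsρ : (x / s / x) ^ ρ = s ^ (-ρ) := by
    rw [div_div_cancel_left' hx.ne', inv_rpow hs0.le, rpow_neg hs0.le]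
  have hbound : H (x / s) * H δ ≤ 2 ^ ρ * s ^ (-ρ) * H x := by
    rcases le_or_gt (x / s) δ with hxs | hxs
    · calc H (x / s) * H δ ≤ H (x / s) := mul_le_of_le_one_right (hnn _) (hle δ)
        _ ≤ 2 ^ ρ * s ^ (-ρ) * H x := hsρ ▸ le_rpow_mul_of_doubling hmono hnn hρ hdouble hx
            (le_div_self hx.le hs0 hs1.le) hxs
    · calc H (x / s) * H δ ≤ H δ := mul_le_of_le_one_left hHδ.le (hle _)
        _ ≤ 2 ^ ρ * (δ / x) ^ ρ * H x := le_rpow_mul_of_doubling hmono hnn hρ hdouble hx hxδ le_rfl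
        _ ≤ 2 ^ ρ * s ^ (-ρ) * H x := by
            rw [← hsρ]; gcongr
  rw [div_le_iff₀ hHx, div_mul_eq_mul_div, div_mul_eq_mul_div, le_div_iff₀ hHδ]
  exact hbound

/-- Breiman's lemma for mixing laws on `(0, 1)`. -/
theorem tendsto_integral_div (hH : RegVarAt0 H γ) (hmono : Monotone H) (hnn : ∀ x, 0 ≤ H x)
    (hle : ∀ x, H x ≤ 1) {ρ : ℝ} (hγρ : γ < ρ) (hρ : 0 ≤ ρ) {ν : Measure ℝ}
    (hν : ∀ᵐ s ∂ν, s ∈ Ioo 0 1) (hint : Integrable (fun s => s ^ (-ρ)) ν) :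
    Tendsto (fun x => (∫ s, H (x / s) ∂ν) / H x) (𝓝[>] 0) (𝓝 (∫ s, s ^ (-γ) ∂ν)) := by
  obtain ⟨C, hC⟩ := hH.exists_div_le_mul_rpow_neg hmono hnn hle hγρ hρ
  simp_rw [← integral_div]
  refine tendsto_integral_filter_of_dominated_convergence (fun s => C * s ^ (-ρ))
    (Eventually.of_forall fun x => ?_) ?_ (hint.const_mul C) ?_
  · exact ((hmono.measurable.comp (measurable_const.div measurable_id)).div_const _)
      |>.aestronglyMeasurable
  · filter_upwards [hC] with x hx
    filter_upwards [hν] with s hs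
    rw [norm_of_nonneg (div_nonneg (hnn _) (hnn _))]
    exact hx s hs
  · filter_upwards [hν] with s hs
    have hs0 := hs.1
    have := hH s⁻¹ (inv_pos.mpr hs0)
    rw [inv_rpow hs0.le, ← rpow_neg hs0.le] at this
    simpa [div_eq_inv_mul] using this

lemma of_tendsto_div {F : ℝ → ℝ} {c : ℝ} (hH : RegVarAt0 H γ)
    (hF : Tendsto (fun x => F x / H x) (𝓝[>] 0) (𝓝 c)) (hc : c ≠ 0) : RegVarAt0 F γ := by
  intro t ht
  have hmul : Tendsto (t * ·) (𝓝[>] (0 : ℝ)) (𝓝[>] 0) :=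
    tendsto_comap.mono_left (comap_mulLeft_nhdsGT_zero ht).ge
  have hlim := ((hF.comp hmul).mul (hH t ht)).div hF hc
  rw [mul_div_cancel_left₀ _ hc] at hlim
  refine hlim.congr' ?_
  filter_upwards [hmul.eventually hH.eventually_ne_zero, hH.eventually_ne_zero] with x h1 h2
  rcases eq_or_ne (F x) 0 with h | h
  · simp [h]
  · simp only [Pi.div_apply, Function.comp_apply]
    field_simp

end RegVarAt0

lemma cdf_map_mul_eq_integral {Ω : Type*} [MeasurableSpace Ω] {P : Measure Ω}
    [IsProbabilityMeasure P] {R S : Ω → ℝ} (hR : Measurable R) (hS : Measurable S)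
    (hind : IndepFun R S P) (hSpos : ∀ᵐ s ∂P.map S, 0 < s) (x : ℝ) :
    cdf (P.map (fun ω => R ω * S ω)) x = ∫ s, cdf (P.map R) (x / s) ∂P.map S := by
  have := Measure.isProbabilityMeasure_map (μ := P) hR.aemeasurable
  have hRS : Measurable fun ω => R ω * S ω := hR.mul hS
  have := Measure.isProbabilityMeasure_map (μ := P) hRS.aemeasurable
  have hjoint : P.map (fun ω => R ω * S ω)
      = ((P.map S).prod (P.map R)).map (fun p => p.2 * p.1) := by
    rw [← (indepFun_iff_map_prod_eq_prod_map_map hS.aemeasurable hR.aemeasurable).mp hind.symm,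
      Measure.map_map (by fun_prop) (by fun_prop)]
    rfl
  have hfubini : P.map (fun ω => R ω * S ω) (Iic x)
      = ∫⁻ s, ENNReal.ofReal (cdf (P.map R) (x / s)) ∂P.map S := by
    rw [hjoint, Measure.map_apply (by fun_prop) measurableSet_Iic,
      Measure.prod_apply (measurableSet_Iic.preimage (by fun_prop))]
    refine lintegral_congr_ae ?_
    filter_upwards [hSpos] with s hs
    rw [ofReal_cdf]
    congr 1
    ext r
    simp [le_div_iff₀ hs]
  rw [cdf_eq_real, measureReal_def, hfubini, ← integral_eq_lintegral_of_nonneg_ae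
    (ae_of_all _ fun _ => cdf_nonneg _ _)]
  exact ((monotone_cdf _).measurable.comp (measurable_const.div measurable_id)).aestronglyMeasurable

theorem beta_product_df_ratio_limit_general
    {Ω : Type*} [MeasurableSpace Ω] (P : Measure Ω) [IsProbabilityMeasure P]
    (α β γ : ℝ) (hα : 0 < α) (hβ : 0 < β) (hγα : γ < α)
    (R S : Ω → ℝ) (hR : Measurable R) (hS : Measurable S)
    (hind : IndepFun R S P)
    (hSlaw : Measure.map S P = volume.withDensity (_root_.betaPDF α β))
    (H Hab : ℝ → ℝ)
    (hH : ∀ x, H x = (P {ω | R ω ≤ x}).toReal)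
    (hHab : ∀ x, Hab x = (P {ω | R ω * S ω ≤ x}).toReal)
    (hHrv : RegVarAt0 H γ) :
    Filter.Tendsto (fun x => Hab x / H x) (nhdsWithin 0 (Set.Ioi 0))
      (nhds (Real.Gamma (α + β) * Real.Gamma (α - γ) /
        (Real.Gamma α * Real.Gamma (α + β - γ))))
    ∧ RegVarAt0 Hab γ := by
  have hSbeta : P.map S = betaMeasure α β := by
    rw [hSlaw, betaPDF_eq_probabilityTheory_betaPDF]; rfl
  have := Measure.isProbabilityMeasure_map (μ := P) hR.aemeasurable
  have hRS : Measurable fun ω => R ω * S ω := hR.mul hS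
  have := Measure.isProbabilityMeasure_map (μ := P) hRS.aemeasurable
  obtain rfl : H = cdf (P.map R) := funext fun x => by
    rw [hH, cdf_eq_real, measureReal_def, Measure.map_apply hR measurableSet_Iic]; rfl
  obtain rfl : Hab = fun x => ∫ s, cdf (P.map R) (x / s) ∂betaMeasure α β := funext fun x => by
    rw [hHab, ← hSbeta, ← cdf_map_mul_eq_integral hR hS hind
      (hSbeta ▸ (ae_mem_Ioo_betaMeasure α β).mono fun _ hs => hs.1),
      cdf_eq_real, measureReal_def, Measure.map_apply hRS measurableSet_Iic]
    rfl
  obtain ⟨ρ, hγρ, hρα⟩ := exists_between (max_lt hγα hα)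
  have hlim := hHrv.tendsto_integral_div (monotone_cdf _) (cdf_nonneg _) (cdf_le_one _)
    ((le_max_left _ _).trans_lt hγρ) ((le_max_right _ _).trans hγρ.le)
    (ae_mem_Ioo_betaMeasure α β) (integrable_rpow_neg_betaMeasure hρα hβ)
  rw [integral_rpow_neg_betaMeasure hα hγα hβ] at hlim
  refine ⟨beta_sub_div_beta γ hβ (add_pos hα hβ) ▸ hlim, hHrv.of_tendsto_div hlim ?_⟩
  exact (div_pos (beta_pos (sub_pos.mpr hγα) hβ) (beta_pos hα hβ)).ne'

theorem beta_product_df_ratio_limit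
    {Ω : Type*} [MeasurableSpace Ω] (P : Measure Ω) [IsProbabilityMeasure P]
    (α β γ : ℝ) (hα : 0 < α) (hβ : 0 < β) (hγ : 0 < γ) (hγα : γ < α)
    (R S : Ω → ℝ) (hR : Measurable R) (hS : Measurable S)
    (hRpos : ∀ᵐ ω ∂P, 0 < R ω)
    (hind : IndepFun R S P)
    (hSlaw : Measure.map S P = volume.withDensity (_root_.betaPDF α β))
    (H Hab : ℝ → ℝ)
    (hH : ∀ x, H x = (P {ω | R ω ≤ x}).toReal)
    (hHab : ∀ x, Hab x = (P {ω | R ω * S ω ≤ x}).toReal)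
    (hHrv : RegVarAt0 H γ) :
    Filter.Tendsto (fun x => Hab x / H x) (nhdsWithin 0 (Set.Ioi 0))
      (nhds (Real.Gamma (α + β) * Real.Gamma (α - γ) /
        (Real.Gamma α * Real.Gamma (α + β - γ))))
    ∧ RegVarAt0 Hab γ :=
  beta_product_df_ratio_limit_general P α β γ hα hβ hγα R S hR hS hind hSlaw H Hab hH hHab hHrv
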